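/- Let A, B ⊆ ℕ and set P := H₀^A ⊗ H₀^B and Q := H₁^A ⊗ H₁^B. Then the decoding oracle d_{P,Q} is the binary meet, in the T1 degrees, of the Turing degrees of A and B: d_{P,Q} is T1-reducible to the characteristic function of A and to the characteristic function of B, and every partial function k : ℕ →. ℕ that is T1-reducible to both characteristic functions is T1-reducible to d_{P,Q}. -/

import Mathlib

/-! With a total oracle `g`, a halting oracle computation queries only finitely many values of
`g`, so it can be simulated by a plain `Nat.Partrec.Code` that receives a finite prefix of `g` as
data. Searching over step bounds (Mathlib's `evaln`) and prefix lengths, which are computable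
relative to `g`, yields a universal function recursive in `g`. Hence `χ_A` computes `φ_p^A(0)` for
the first coordinate `p` of `n = ⟨p, q⟩`, which tells `P` from `Q`; symmetrically for `χ_B`.

Conversely, let `k` be T1-reducible to `χ_A` and to `χ_B`. By s-m-n, uniformly in `(n, v)` there
are programs `p`, `q` with `φ_p^A(0) = φ_q^B(0) = [k n ≠ v]` whenever `k n` is defined. Then
`d_{P,Q}⟨p, q⟩` is `0` exactly for the right guess `v = k n`, and an unbounded search finds it. -/

open Classical in
/-- The oracle game: the list of previous answers by Merlin up to stage `i`,
for the answer sequence `s`. -/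
def prefixList (s : ℕ → ℕ) (i : ℕ) : List ℕ := List.ofFn (fun j : Fin i => s j)

/-- A winning Arthur+Nimue strategy for the reduction game of the basic oracle `ℱ`
to the basic oracle `𝒢`. -/
def Winning (ℱ 𝒢 : Set (Set ℕ)) (σ : List ℕ →. Option ℕ) (ν : Set ℕ → List ℕ → Set ℕ) : Prop :=
  (∀ F ∈ ℱ, ∀ l : List ℕ, ν F l ∈ 𝒢) ∧
  ∀ F ∈ ℱ, ∀ s : ℕ → ℕ, (∀ i, s i ∈ ν F (prefixList s i)) →
    ∃ k, (∀ i ≤ k, (σ (prefixList s i)).Dom) ∧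
      (∀ i < k, none ∈ σ (prefixList s i)) ∧
      ∃ u ∈ F, some u ∈ σ (prefixList s k)

/-- The encoding of an Arthur strategy as a partial function `ℕ →. ℕ`, via the
standard Mathlib encodings of `List ℕ` and `Option ℕ`. -/
def arthurCode (σ : List ℕ →. Option ℕ) : ℕ →. ℕ :=
  fun n => (σ (Denumerable.ofNat (List ℕ) n)).map Encodable.encode

open Classical in
/-- The decoding oracle associated to the promise problem `(P, Q)`: value `0` on `P`,
value `1` on `Q`, undefined elsewhere. -/
noncomputable def dOracle (P Q : Set ℕ) : ℕ →. ℕ :=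
  fun n => ⟨n ∈ P ∪ Q, fun _ => if n ∈ Q then 1 else 0⟩

open Classical in
/-- The characteristic function of a set of naturals. -/
noncomputable def chi (A : Set ℕ) : ℕ → ℕ := fun n => if n ∈ A then 1 else 0

/-- The coded cartesian product of two sets of naturals. -/
def tensor (P Q : Set ℕ) : Set ℕ := {x | ∃ p ∈ P, ∃ q ∈ Q, x = Nat.pair p q}

infixl:70 " ⊗ " => tensor

/-- Oracle computability, as in Mathlib's `Nat.RecursiveIn`. -/
inductive Nat.RecursiveInSingle (g : ℕ →. ℕ) : (ℕ →. ℕ) → Prop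
  | zero : Nat.RecursiveInSingle g fun _ => 0
  | succ : Nat.RecursiveInSingle g Nat.succ
  | left : Nat.RecursiveInSingle g fun n => (Nat.unpair n).1
  | right : Nat.RecursiveInSingle g fun n => (Nat.unpair n).2
  | oracle : Nat.RecursiveInSingle g g
  | pair {f h : ℕ →. ℕ} (hf : Nat.RecursiveInSingle g f) (hh : Nat.RecursiveInSingle g h) :
      Nat.RecursiveInSingle g fun n => (Nat.pair <$> f n <*> h n)
  | comp {f h : ℕ →. ℕ} (hf : Nat.RecursiveInSingle g f) (hh : Nat.RecursiveInSingle g h) :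
      Nat.RecursiveInSingle g fun n => h n >>= f
  | prec {f h : ℕ →. ℕ} (hf : Nat.RecursiveInSingle g f) (hh : Nat.RecursiveInSingle g h) :
      Nat.RecursiveInSingle g
        (Nat.unpaired fun a n =>
          n.rec (f a) fun y IH => do
            let i ← IH
            h (Nat.pair a (Nat.pair y i)))
  | rfind {f : ℕ →. ℕ} (hf : Nat.RecursiveInSingle g f) :
      Nat.RecursiveInSingle g fun a =>
        Nat.rfind fun n => (fun m => m = 0) <$> f (Nat.pair a n)

/-- `f` is T1-reducible to `g`: some partial function recursive in the oracle `g`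
extends `f`. -/
def T1Reducible (f g : ℕ →. ℕ) : Prop :=
  ∃ h : ℕ →. ℕ, Nat.RecursiveInSingle g h ∧ ∀ n : ℕ, ∀ a ∈ f n, a ∈ h n

/-- `f` is T1-computable: it has a partial computable extension. -/
def T1Computable (f : ℕ →. ℕ) : Prop :=
  ∃ h : ℕ →. ℕ, Nat.Partrec h ∧ ∀ n : ℕ, ∀ a ∈ f n, a ∈ h n

/-- Codes for oracle computations: Mathlib's `Nat.Partrec.Code` extended by an
`oracle` constructor. -/
inductive OCode : Type
  | zero : OCode
  | succ : OCode
  | left : OCode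
  | right : OCode
  | oracle : OCode
  | pair : OCode → OCode → OCode
  | comp : OCode → OCode → OCode
  | prec : OCode → OCode → OCode
  | rfind' : OCode → OCode

/-- Evaluation of an oracle code relative to the oracle `g`, by the same structural
recursion as Mathlib's `Nat.Partrec.Code.eval`. -/
def OCode.eval (g : ℕ →. ℕ) : OCode → ℕ →. ℕ
  | .zero => pure 0
  | .succ => Nat.succ
  | .left => ↑fun n : ℕ => n.unpair.1
  | .right => ↑fun n : ℕ => n.unpair.2
  | .oracle => g
  | .pair cf cg => fun n => Nat.pair <$> cf.eval g n <*> cg.eval g n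
  | .comp cf cg => fun n => cg.eval g n >>= cf.eval g
  | .prec cf cg =>
    Nat.unpaired fun a n =>
      n.rec (cf.eval g a) fun y IH => do
        let i ← IH
        cg.eval g (Nat.pair a (Nat.pair y i))
  | .rfind' cf =>
    Nat.unpaired fun a m =>
      (Nat.rfind fun n => (fun m => m = 0) <$> cf.eval g (Nat.pair a (n + m))).map (· + m)

/-- The `n`-th oracle code. -/
def OCode.ofNat : ℕ → OCode
  | 0 => .zero
  | 1 => .succ
  | 2 => .left
  | 3 => .right
  | 4 => .oracle
  | n + 5 =>
    have h1 : (n / 4).unpair.1 < n + 5 :=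
      lt_of_le_of_lt (le_trans (Nat.unpair_left_le _) (Nat.div_le_self _ _)) (by omega)
    have h2 : (n / 4).unpair.2 < n + 5 :=
      lt_of_le_of_lt (le_trans (Nat.unpair_right_le _) (Nat.div_le_self _ _)) (by omega)
    if n % 4 = 0 then .pair (OCode.ofNat (n / 4).unpair.1) (OCode.ofNat (n / 4).unpair.2)
    else if n % 4 = 1 then .comp (OCode.ofNat (n / 4).unpair.1) (OCode.ofNat (n / 4).unpair.2)
    else if n % 4 = 2 then .prec (OCode.ofNat (n / 4).unpair.1) (OCode.ofNat (n / 4).unpair.2)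
    else .rfind' (OCode.ofNat (n / 4).unpair.1)

/-- `φ_e^g`: the evaluation of the `e`-th oracle code relative to the oracle `g`. -/
def phi (g : ℕ →. ℕ) (e : ℕ) : ℕ →. ℕ := (OCode.ofNat e).eval g

/-- `H_i^A`: the set of (codes of) oracle programs which, run with the characteristic
function of `A` as oracle, halt on input `0` with output `i`. -/
def Hset (A : Set ℕ) (i : ℕ) : Set ℕ := {e : ℕ | (i : ℕ) ∈ phi (chi A) e 0}

/- `ℕ →. ℕ` is not reducibly a function type, so `Part.bind_some` and `Part.mem_bind_iff` do not
rewrite binds into a partial function; these are the same facts stated for `PFun`. -/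
theorem Part.some_bind_pfun (a : ℕ) (f : ℕ →. ℕ) : Part.some a >>= f = f a :=
  Part.bind_some a f

theorem Part.mem_bind_pfun {x : Part ℕ} {f : ℕ →. ℕ} {a : ℕ} :
    a ∈ x >>= f ↔ ∃ b ∈ x, a ∈ f b :=
  Part.mem_bind_iff

theorem Part.mem_seq_pair {x y : Part ℕ} {a : ℕ} :
    a ∈ (Nat.pair <$> x <*> y) ↔ ∃ b ∈ x, ∃ c ∈ y, a = Nat.pair b c := by
  simp only [Seq.seq, Part.map_eq_map, Part.mem_bind_iff, Part.mem_map_iff]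
  constructor
  · rintro ⟨_, ⟨b, hb, rfl⟩, c, hc, rfl⟩
    exact ⟨b, hb, c, hc, rfl⟩
  · rintro ⟨b, hb, c, hc, rfl⟩
    exact ⟨_, ⟨b, hb, rfl⟩, c, hc, rfl⟩

namespace Nat.RecursiveInSingle

variable {o : ℕ →. ℕ}

theorem of_eq {f h : ℕ →. ℕ} (hf : Nat.RecursiveInSingle o f) (H : ∀ n, f n = h n) :
    Nat.RecursiveInSingle o h :=
  funext H ▸ hf

theorem of_partrec {f : ℕ →. ℕ} (hf : Nat.Partrec f) : Nat.RecursiveInSingle o f := by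
  induction hf with
  | zero => exact .zero
  | succ => exact .succ
  | left => exact .left
  | right => exact .right
  | pair _ _ ihf ihh => exact .pair ihf ihh
  | comp _ _ ihf ihh => exact .comp ihf ihh
  | prec _ _ ihf ihh => exact .prec ihf ihh
  | rfind _ ihf => exact .rfind ihf

theorem of_primrec {f : ℕ → ℕ} (hf : Primrec f) : Nat.RecursiveInSingle o f :=
  of_partrec (Partrec.nat_iff.1 hf.to_comp.partrec)

theorem comp_primrec {h : ℕ →. ℕ} {r : ℕ → ℕ} (hh : Nat.RecursiveInSingle o h)
    (hr : Primrec r) : Nat.RecursiveInSingle o fun n => h (r n) :=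
  (hh.comp (of_primrec hr)).of_eq fun _ => Part.some_bind_pfun _ _

theorem map₂ {h : ℕ →. ℕ} {q : ℕ → ℕ → ℕ} (hh : Nat.RecursiveInSingle o h)
    (hq : Primrec₂ q) : Nat.RecursiveInSingle o fun n => (h n).map (q n) := by
  have hq' : Primrec fun m : ℕ => q m.unpair.1 m.unpair.2 :=
    hq.comp (Primrec.fst.comp Primrec.unpair) (Primrec.snd.comp Primrec.unpair)
  refine ((of_primrec hq').comp ((of_primrec .id).pair hh)).of_eq fun _ => ?_
  ext a
  refine Part.mem_bind_pfun.trans ?_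
  simp only [Part.mem_seq_pair, PFun.coe_val, Part.mem_some_iff, Part.mem_map_iff]
  constructor
  · rintro ⟨_, ⟨_, rfl, b, hb, rfl⟩, rfl⟩
    exact ⟨b, hb, by simp⟩
  · rintro ⟨b, hb, rfl⟩
    exact ⟨_, ⟨_, rfl, b, hb, rfl⟩, by simp⟩

theorem compare {h : ℕ →. ℕ} (hh : Nat.RecursiveInSingle o h) :
    Nat.RecursiveInSingle o fun z => (h z.unpair.1).map fun w => if w = z.unpair.2 then 0 else 1 :=
  (hh.comp_primrec (Primrec.fst.comp Primrec.unpair)).map₂ <| Primrec.ite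
    (Primrec.eq.comp Primrec.snd (Primrec.snd.comp (Primrec.unpair.comp Primrec.fst)))
    (.const 0) (.const 1)

theorem rfindOpt {F : ℕ → Option ℕ}
    (hF : Nat.RecursiveInSingle o fun n => Part.some (Encodable.encode (F n))) :
    Nat.RecursiveInSingle o fun x => Nat.rfindOpt fun t => F (Nat.pair x t) := by
  -- `encode none = 0` and `encode (some b) = b + 1`
  have htest := map₂ hF (q := fun _ m => if m = 0 then 1 else 0)
    (Primrec.ite (Primrec.eq.comp Primrec.snd (.const 0)) (.const 1) (.const 0)).to₂
  have hval := map₂ hF (q := fun _ m => m - 1) (Primrec.nat_sub.comp Primrec.snd (.const 1)).to₂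
  refine (hval.comp (map₂ htest.rfind Primrec₂.natPair)).of_eq fun x => ?_
  have htest_eq : ∀ t, (fun m => decide (m = 0)) <$>
      (Part.some (Encodable.encode (F (Nat.pair x t)))).map (fun m => if m = 0 then 1 else 0) =
      Part.some (F (Nat.pair x t)).isSome := by
    intro t
    cases F (Nat.pair x t) <;> simp
  simp only [htest_eq]
  ext a
  refine Part.mem_bind_pfun.trans ?_
  simp only [Nat.rfindOpt, Part.mem_bind_iff, Part.mem_map_iff, Part.mem_some_iff,
    Part.coe_some, Part.mem_coe, Option.mem_def]
  have hsome : ∀ t ∈ Nat.rfind (fun t => Part.some (F (Nat.pair x t)).isSome),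
      ∃ b, F (Nat.pair x t) = some b := fun t ht =>
    Option.isSome_iff_exists.1 (by simpa using Nat.rfind_spec ht)
  constructor
  · rintro ⟨_, ⟨t, ht, rfl⟩, _, rfl, rfl⟩
    obtain ⟨b, hb⟩ := hsome t ht
    exact ⟨t, ht, by simp [hb]⟩
  · rintro ⟨t, ht, hb⟩
    exact ⟨_, ⟨t, ht, rfl⟩, _, rfl, by simp [hb]⟩

end Nat.RecursiveInSingle

def listOracle (l : List ℕ) : ℕ →. ℕ := fun n => (l[n]? : Part ℕ)

theorem mem_listOracle_prefixList {g : ℕ → ℕ} {k n a : ℕ} :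
    a ∈ listOracle (prefixList g k) n ↔ n < k ∧ g n = a := by
  simp [listOracle, prefixList, List.getElem?_ofFn]

namespace OCode

open Nat.Partrec (Code)

variable {o : ℕ →. ℕ}

def toNat : OCode → ℕ
  | zero => 0
  | succ => 1
  | left => 2
  | right => 3
  | oracle => 4
  | pair a b => 4 * Nat.pair a.toNat b.toNat + 5
  | comp a b => 4 * Nat.pair a.toNat b.toNat + 1 + 5
  | prec a b => 4 * Nat.pair a.toNat b.toNat + 2 + 5
  | rfind' a => 4 * Nat.pair a.toNat 0 + 3 + 5

theorem ofNat_toNat (c : OCode) : ofNat c.toNat = c := by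
  induction c with
  | zero | succ | left | right | oracle => simp [toNat, ofNat]
  | pair a b iha ihb | comp a b iha ihb | prec a b iha ihb =>
    simp [toNat, ofNat, Nat.mul_add_div, iha, ihb]
  | rfind' a iha => simp [toNat, ofNat, Nat.mul_add_div, iha]

theorem mem_eval_pair {cf cg : OCode} {n a : ℕ} :
    a ∈ (pair cf cg).eval o n ↔ ∃ b ∈ cf.eval o n, ∃ c ∈ cg.eval o n, a = Nat.pair b c :=
  Part.mem_seq_pair

theorem eval_comp (cf cg : OCode) (n : ℕ) : (comp cf cg).eval o n = cg.eval o n >>= cf.eval o :=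
  rfl

theorem eval_prec_zero (cf cg : OCode) (a : ℕ) :
    (prec cf cg).eval o (Nat.pair a 0) = cf.eval o a := by
  simp [eval, Nat.unpaired]

theorem eval_prec_succ (cf cg : OCode) (a n : ℕ) :
    (prec cf cg).eval o (Nat.pair a (n + 1)) =
      (prec cf cg).eval o (Nat.pair a n) >>= fun i => cg.eval o (Nat.pair a (Nat.pair n i)) := by
  simp [eval, Nat.unpaired]

/-- The `rfind` of `RecursiveInSingle`, as an oracle code: `rfind'` started at offset `0`. -/
def rfind (cf : OCode) : OCode := comp (rfind' cf) (pair (pair left right) zero)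

theorem eval_rfind (cf : OCode) (a : ℕ) :
    (rfind cf).eval o a = Nat.rfind fun n => (fun m => m = 0) <$> cf.eval o (Nat.pair a n) := by
  simp [rfind, eval, Seq.seq, Nat.unpaired, show (pure 0 : ℕ →. ℕ) a = Part.some 0 from rfl,
    Part.map_id']

theorem exists_eval_eq {f : ℕ →. ℕ} (hf : Nat.RecursiveInSingle o f) :
    ∃ c : OCode, c.eval o = f := by
  induction hf with
  | zero => exact ⟨zero, rfl⟩
  | succ => exact ⟨succ, rfl⟩
  | left => exact ⟨left, rfl⟩
  | right => exact ⟨right, rfl⟩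
  | oracle => exact ⟨oracle, rfl⟩
  | pair _ _ ihf ihh =>
    obtain ⟨cf, rfl⟩ := ihf; obtain ⟨ch, rfl⟩ := ihh; exact ⟨pair cf ch, rfl⟩
  | comp _ _ ihf ihh =>
    obtain ⟨cf, rfl⟩ := ihf; obtain ⟨ch, rfl⟩ := ihh; exact ⟨comp cf ch, rfl⟩
  | prec _ _ ihf ihh =>
    obtain ⟨cf, rfl⟩ := ihf; obtain ⟨ch, rfl⟩ := ihh; exact ⟨prec cf ch, rfl⟩
  | rfind _ ihf =>
    obtain ⟨cf, rfl⟩ := ihf; exact ⟨rfind cf, funext (eval_rfind cf)⟩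

def const : ℕ → OCode
  | 0 => zero
  | n + 1 => comp succ (const n)

theorem eval_const (m x : ℕ) : (const m).eval o x = Part.some m := by
  induction m with
  | zero => rfl
  | succ m ih => rw [const, eval_comp, ih, Part.some_bind_pfun]; rfl

theorem primrec_toNat_const : Primrec fun m => (const m).toNat := by
  have hstep : Primrec₂ fun (_ t : ℕ) => 4 * Nat.pair 1 t + 1 + 5 :=
    (Primrec.nat_add.comp (Primrec.nat_add.comp (Primrec.nat_mul.comp (Primrec.const 4)
      (Primrec₂.natPair.comp (Primrec.const 1) Primrec.snd)) (Primrec.const 1))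
      (Primrec.const 5)).to₂
  refine (Primrec.nat_iterate Primrec.id (Primrec.const 0) hstep).of_eq fun m => ?_
  induction m with
  | zero => rfl
  | succ m ih =>
    simp only [id] at ih ⊢
    rw [Function.iterate_succ_apply', ih]
    rfl

/-- Continuity of evaluation in the oracle: a halting computation only queries finitely many
values, so it survives any passage to oracles that eventually answer each query correctly. -/
theorem eventually_mem_eval {ι : Type*} {l : Filter ι} {o : ℕ →. ℕ} {O : ι → ℕ →. ℕ}
    (hO : ∀ n a, a ∈ o n → ∀ᶠ i in l, a ∈ O i n) (c : OCode) {x a : ℕ}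
    (h : a ∈ c.eval o x) : ∀ᶠ i in l, a ∈ c.eval (O i) x := by
  induction c generalizing x a with
  | zero | succ | left | right => exact .of_forall fun _ => h
  | oracle => exact hO x a h
  | pair cf cg ihf ihg =>
    obtain ⟨b, hb, c, hc, rfl⟩ := mem_eval_pair.1 h
    exact ((ihf hb).and (ihg hc)).mono fun i ⟨hb, hc⟩ => mem_eval_pair.2 ⟨b, hb, c, hc, rfl⟩
  | comp cf cg ihf ihg =>
    obtain ⟨b, hb, ha⟩ := Part.mem_bind_pfun.1 h
    exact ((ihg hb).and (ihf ha)).mono fun i ⟨hb, ha⟩ => Part.mem_bind_pfun.2 ⟨b, hb, ha⟩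
  | prec cf cg ihf ihg =>
    suffices H : ∀ n b, b ∈ (prec cf cg).eval o (Nat.pair x.unpair.1 n) →
        ∀ᶠ i in l, b ∈ (prec cf cg).eval (O i) (Nat.pair x.unpair.1 n) by
      simpa using H x.unpair.2 a (by simpa using h)
    intro n
    induction n with
    | zero =>
      intro b hb
      rw [eval_prec_zero] at hb
      exact (ihf hb).mono fun i hb => by rwa [eval_prec_zero]
    | succ n ih =>
      intro b hb
      rw [eval_prec_succ] at hb
      obtain ⟨c, hc, hb⟩ := Part.mem_bind_pfun.1 hb
      exact ((ih c hc).and (ihg hb)).mono fun i ⟨hc, hb⟩ => by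
        rw [eval_prec_succ]; exact Part.mem_bind_pfun.2 ⟨c, hc, hb⟩
  | rfind' cf ihf =>
    obtain ⟨y, m, rfl⟩ : ∃ y m, x = Nat.pair y m := ⟨_, _, (Nat.pair_unpair x).symm⟩
    simp only [eval, Nat.unpaired, Nat.unpair_pair, Part.mem_map_iff] at h ⊢
    obtain ⟨n₀, hn₀, rfl⟩ := h
    have hlift : ∀ j b, b ∈ (fun v => decide (v = 0)) <$> cf.eval o (Nat.pair y (j + m)) →
        ∀ᶠ i in l, b ∈ (fun v => decide (v = 0)) <$> cf.eval (O i) (Nat.pair y (j + m)) := by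
      intro j b hb
      obtain ⟨v, hv, rfl⟩ := (Part.mem_map_iff _).1 hb
      exact (ihf hv).mono fun i hv => Part.mem_map _ hv
    obtain ⟨hfound, hbefore⟩ := Nat.mem_rfind.1 hn₀
    have hbefore' : ∀ᶠ i in l, ∀ j ∈ Finset.range n₀,
        false ∈ (fun v => decide (v = 0)) <$> cf.eval (O i) (Nat.pair y (j + m)) :=
      (Filter.eventually_all_finset _).2 fun j hj => hlift j false (hbefore (Finset.mem_range.1 hj))
    exact ((hlift n₀ true hfound).and hbefore').mono fun i ⟨hfound, hbefore⟩ =>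
      ⟨n₀, Nat.mem_rfind.2 ⟨hfound, fun hm => hbefore _ (Finset.mem_range.2 hm)⟩, rfl⟩

theorem eval_mono {o o' : ℕ →. ℕ} (hoo' : ∀ n a, a ∈ o n → a ∈ o' n) (c : OCode) {x a : ℕ}
    (h : a ∈ c.eval o x) : a ∈ c.eval o' x :=
  Filter.eventually_top.1 (eventually_mem_eval (l := ⊤) (O := fun _ : Unit => o')
    (fun n a ha => Filter.eventually_top.2 fun _ => hoo' n a ha) c h) ()

theorem mem_eval_of_mem_eval_prefixList {g : ℕ → ℕ} {k : ℕ} (c : OCode) {x a : ℕ}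
    (h : a ∈ c.eval (listOracle (prefixList g k)) x) : a ∈ c.eval g x :=
  eval_mono (fun _ _ ha => Part.mem_some_iff.2 (mem_listOracle_prefixList.1 ha).2.symm) c h

theorem exists_mem_eval_prefixList {g : ℕ → ℕ} (c : OCode) {x a : ℕ} (h : a ∈ c.eval g x) :
    ∃ k, a ∈ c.eval (listOracle (prefixList g k)) x :=
  (eventually_mem_eval (l := Filter.atTop) (fun n _ ha => (Filter.eventually_gt_atTop n).mono
    fun _ hk => mem_listOracle_prefixList.2 ⟨hk, (Part.mem_some_iff.1 ha).symm⟩) c h).exists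

/-- `pair (pair L a) b ↦ pair L (pair a b)` -/
def assocRight : Code := .pair (.comp .left .left) (.pair (.comp .right .left) .right)

/-- `pair L (pair a b) ↦ pair (pair L a) b` -/
def assocLeft : Code := .pair (.pair .left (.comp .left .right)) (.comp .right .right)

theorem eval_assocRight (L a b : ℕ) :
    Code.eval assocRight (Nat.pair (Nat.pair L a) b) = Part.some (Nat.pair L (Nat.pair a b)) := by
  simp [assocRight, Code.eval, Seq.seq, Part.some_bind_pfun]

theorem eval_assocLeft (L a b : ℕ) :
    Code.eval assocLeft (Nat.pair L (Nat.pair a b)) = Part.some (Nat.pair (Nat.pair L a) b) := by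
  simp [assocLeft, Code.eval, Seq.seq, Part.some_bind_pfun]

theorem partrec_listOracle_uncurried :
    Nat.Partrec fun z => listOracle (Denumerable.ofNat (List ℕ) z.unpair.1) z.unpair.2 :=
  Partrec.nat_iff.1 <| Computable.ofOption <| (Primrec.list_getElem?.comp
    ((Primrec.ofNat (List ℕ)).comp (Primrec.fst.comp Primrec.unpair))
    (Primrec.snd.comp Primrec.unpair)).to_comp

noncomputable def listOracleCode : Code :=
  Classical.choose (Code.exists_code.1 partrec_listOracle_uncurried)

theorem eval_listOracleCode (L n : ℕ) :
    Code.eval listOracleCode (Nat.pair L n) = listOracle (Denumerable.ofNat (List ℕ) L) n := by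
  unfold listOracleCode
  simpa using congrFun (Classical.choose_spec (Code.exists_code.1 partrec_listOracle_uncurried))
    (Nat.pair L n)

def compileNode (r : ℕ) (c₁ c₂ : Code) : Code :=
  if r = 0 then c₁.pair c₂
  else if r = 1 then c₁.comp (Code.left.pair c₂)
  else if r = 2 then (c₁.prec (c₂.comp assocRight)).comp assocLeft
  else (c₁.comp assocRight).rfind'.comp assocLeft

/-- The finite oracle, coded as a list `L`, is an extra first argument threaded through the
computation. -/
noncomputable def compile : OCode → Code
  | zero => .zero
  | succ => Code.succ.comp .right
  | left => Code.left.comp .right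
  | right => Code.right.comp .right
  | oracle => listOracleCode
  | pair a b => compileNode 0 a.compile b.compile
  | comp a b => compileNode 1 a.compile b.compile
  | prec a b => compileNode 2 a.compile b.compile
  | rfind' a => compileNode 3 a.compile .zero

theorem eval_compile (c : OCode) (L x : ℕ) :
    Code.eval c.compile (Nat.pair L x) = c.eval (listOracle (Denumerable.ofNat (List ℕ) L)) x := by
  induction c generalizing x with
  | zero => rfl
  | succ | left | right => simp [compile, Code.eval, OCode.eval, Part.some_bind_pfun]
  | oracle => exact eval_listOracleCode L x
  | pair a b iha ihb => simp [compile, compileNode, Code.eval, OCode.eval, iha, ihb]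
  | comp a b iha ihb =>
    ext v
    change v ∈ Code.eval (Code.left.pair b.compile) (Nat.pair L x) >>= Code.eval a.compile ↔ _
    simp only [Part.mem_bind_pfun, Code.eval, Part.mem_seq_pair, ihb, OCode.eval]
    constructor
    · rintro ⟨_, ⟨_, hL, w, hw, rfl⟩, hv⟩
      simp only [Nat.unpair_pair, PFun.coe_val, Part.mem_some_iff] at hL
      subst hL
      exact ⟨w, hw, (iha w) ▸ hv⟩
    · rintro ⟨w, hw, hv⟩
      exact ⟨_, ⟨L, by simp, w, hw, rfl⟩, (iha w).symm ▸ hv⟩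
  | prec a b iha ihb =>
    have hprec : ∀ x₁ x₂, Code.eval (a.compile.prec (b.compile.comp assocRight))
        (Nat.pair (Nat.pair L x₁) x₂) =
          (prec a b).eval (listOracle (Denumerable.ofNat (List ℕ) L)) (Nat.pair x₁ x₂) := by
      intro x₁ x₂
      induction x₂ with
      | zero => rw [Code.eval_prec_zero, eval_prec_zero, iha]
      | succ n ih =>
        rw [Code.eval_prec_succ, eval_prec_succ, ih]
        congr 1
        funext i
        change Code.eval assocRight _ >>= _ = _
        rw [eval_assocRight, Part.some_bind_pfun, ihb]
    change Code.eval assocLeft _ >>= _ = _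
    rw [← Nat.pair_unpair x, eval_assocLeft, Part.some_bind_pfun, hprec]
  | rfind' a iha =>
    change Code.eval assocLeft _ >>= _ = _
    rw [← Nat.pair_unpair x, eval_assocLeft, Part.some_bind_pfun]
    simp only [Code.eval, OCode.eval, Nat.unpaired, Nat.unpair_pair]
    congr 3
    funext n
    rw [eval_assocRight, Part.some_bind_pfun, iha]


noncomputable def compileLeaf (n : ℕ) : Code :=
  [.zero, Code.succ.comp .right, Code.left.comp .right, Code.right.comp .right,
    listOracleCode].getD n .zero

theorem compile_ofNat_of_lt_five {n : ℕ} (hn : n < 5) : (ofNat n).compile = compileLeaf n := by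
  interval_cases n <;> simp [ofNat, compile, compileLeaf]

theorem compile_ofNat_add_five (n : ℕ) :
    (ofNat (n + 5)).compile =
      compileNode (n % 4) (ofNat (n / 4).unpair.1).compile (ofNat (n / 4).unpair.2).compile := by
  rw [ofNat]
  split_ifs with h0 h1 h2 <;> simp [compile, compileNode, *]

noncomputable def compileStep (l : List Code) : Option Code :=
  if l.length < 5 then some (compileLeaf l.length)
  else (l[((l.length - 5) / 4).unpair.1]?).bind fun c₁ =>
    (l[((l.length - 5) / 4).unpair.2]?).map fun c₂ => compileNode ((l.length - 5) % 4) c₁ c₂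

theorem compileStep_range (e : ℕ) :
    compileStep ((List.range e).map fun i => (ofNat i).compile) = some (ofNat e).compile := by
  have hget : ∀ i < e,
      ((List.range e).map fun i => (ofNat i).compile)[i]? = some (ofNat i).compile :=
    fun i hi => by simp [hi]
  rcases lt_or_ge e 5 with he | he
  · simp [compileStep, he, compile_ofNat_of_lt_five he]
  · obtain ⟨n, rfl⟩ := Nat.exists_eq_add_of_le' he
    have h₁ : (n / 4).unpair.1 < n + 5 := by
      have := Nat.unpair_left_le (n / 4); have := Nat.div_le_self n 4; omega
    have h₂ : (n / 4).unpair.2 < n + 5 := by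
      have := Nat.unpair_right_le (n / 4); have := Nat.div_le_self n 4; omega
    simp [compileStep, hget _ h₁, hget _ h₂, compile_ofNat_add_five]

theorem primrec_compileNode :
    Primrec fun p : ℕ × Code × Code => compileNode p.1 p.2.1 p.2.2 := by
  have hr : ∀ k, PrimrecPred fun p : ℕ × Code × Code => p.1 = k :=
    fun k => Primrec.eq.comp Primrec.fst (Primrec.const k)
  have h₁ : Primrec fun p : ℕ × Code × Code => p.2.1 := Primrec.fst.comp Primrec.snd
  have h₂ : Primrec fun p : ℕ × Code × Code => p.2.2 := Primrec.snd.comp Primrec.snd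
  open Nat.Partrec.Code in
  exact Primrec.ite (hr 0) (primrec₂_pair.comp h₁ h₂) <|
    Primrec.ite (hr 1) (primrec₂_comp.comp h₁ (primrec₂_pair.comp (Primrec.const _) h₂)) <|
    Primrec.ite (hr 2) (primrec₂_comp.comp (primrec₂_prec.comp h₁
      (primrec₂_comp.comp h₂ (Primrec.const _))) (Primrec.const _)) <|
    primrec₂_comp.comp (primrec_rfind'.comp (primrec₂_comp.comp h₁ (Primrec.const _)))
      (Primrec.const _)

theorem primrec_compileStep : Primrec compileStep := by
  have hlen : Primrec fun l : List Code => l.length := Primrec.list_length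
  have hm : Primrec fun l : List Code => (l.length - 5) / 4 :=
    Primrec.nat_div.comp (Primrec.nat_sub.comp hlen (Primrec.const 5)) (Primrec.const 4)
  have hleaf : Primrec compileLeaf := (Primrec.list_getD _).comp (Primrec.const _) Primrec.id
  have hnode : Primrec₂ fun (p : List Code × Code) (c₂ : Code) =>
      compileNode ((p.1.length - 5) % 4) p.2 c₂ :=
    (primrec_compileNode.comp (Primrec.pair (Primrec.nat_mod.comp (Primrec.nat_sub.comp
      (hlen.comp (Primrec.fst.comp Primrec.fst)) (Primrec.const 5)) (Primrec.const 4))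
      (Primrec.pair (Primrec.snd.comp Primrec.fst) Primrec.snd))).to₂
  exact Primrec.ite (Primrec.nat_lt.comp hlen (Primrec.const 5))
    (Primrec.option_some.comp (hleaf.comp hlen))
    (Primrec.option_bind
      (Primrec.list_getElem?.comp Primrec.id (Primrec.fst.comp (Primrec.unpair.comp hm)))
      (Primrec.option_map (Primrec.list_getElem?.comp Primrec.fst
        (Primrec.snd.comp (Primrec.unpair.comp (hm.comp Primrec.fst)))) hnode).to₂)

theorem primrec_compile_ofNat : Primrec fun e => (ofNat e).compile :=
  (Primrec.nat_strong_rec (fun _ e => (ofNat e).compile) (primrec_compileStep.comp Primrec.snd).to₂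
    fun _ e => compileStep_range e).comp (Primrec.const 0) Primrec.id

end OCode

/-- Relativized s-m-n theorem. -/
theorem exists_primrec_index {o F : ℕ →. ℕ} (hF : Nat.RecursiveInSingle o F) :
    ∃ s : ℕ → ℕ, Primrec s ∧ ∀ z, phi o (s z) 0 = F z := by
  obtain ⟨c, rfl⟩ := OCode.exists_eval_eq hF
  refine ⟨fun z => (OCode.comp c (OCode.const z)).toNat, ?_, fun z => ?_⟩
  · exact Primrec.nat_add.comp (Primrec.nat_add.comp (Primrec.nat_mul.comp (Primrec.const 4)
      (Primrec₂.natPair.comp (Primrec.const c.toNat) OCode.primrec_toNat_const))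
      (Primrec.const 1)) (Primrec.const 5)
  · rw [phi, OCode.ofNat_toNat, OCode.eval_comp, OCode.eval_const, Part.some_bind_pfun]

/- Reversed, since `encode (a :: l) = ⟨a, encode l⟩ + 1` makes the reversed prefix the one
computed by primitive recursion. -/
open Encodable in
theorem recursiveIn_encode_reverse_prefixList (g : ℕ → ℕ) :
    Nat.RecursiveInSingle g fun k => Part.some (encode (prefixList g k).reverse) := by
  have hstep := ((Nat.RecursiveInSingle.oracle (g := g)).comp_primrec
    (Primrec.fst.comp (Primrec.unpair.comp (Primrec.snd.comp Primrec.unpair)))).map₂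
    (q := fun n v => Nat.succ (Nat.pair v n.unpair.2.unpair.2))
    (Primrec.succ.comp (Primrec₂.natPair.comp Primrec.snd
      (Primrec.snd.comp (Primrec.unpair.comp (Primrec.snd.comp (Primrec.unpair.comp
        Primrec.fst)))))).to₂
  refine ((Nat.RecursiveInSingle.zero.prec hstep).comp_primrec
    (Primrec₂.natPair.comp (Primrec.const 0) Primrec.id)).of_eq fun k => ?_
  simp only [Nat.unpaired, Nat.unpair_pair]
  induction k with
  | zero => rfl
  | succ k ih =>
    simp only [id] at ih ⊢
    rw [ih]
    have hrev : (prefixList g (k + 1)).reverse = g k :: (prefixList g k).reverse := by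
      rw [prefixList, List.ofFn_succ']; simp [prefixList]
    simp [hrev, Encodable.encode_list_cons]

open Encodable Nat.Partrec in
/-- Run the compiled `e`-th oracle program on input `x` for `s` steps, with the oracle `g`
answering queries below `k` only. -/
noncomputable def boundedEval (g : ℕ → ℕ) (e x s k : ℕ) : Option ℕ :=
  Code.evaln s (OCode.ofNat e).compile (Nat.pair (encode (prefixList g k)) x)

theorem mem_phi_of_boundedEval_eq_some {g : ℕ → ℕ} {e x s k b : ℕ}
    (h : boundedEval g e x s k = some b) : b ∈ phi g e x := by
  have := Nat.Partrec.Code.evaln_sound h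
  rw [OCode.eval_compile, Denumerable.ofNat_encode] at this
  exact OCode.mem_eval_of_mem_eval_prefixList _ this

theorem exists_boundedEval_eq_some {g : ℕ → ℕ} {e x a : ℕ} (h : a ∈ phi g e x) :
    ∃ s k, boundedEval g e x s k = some a := by
  obtain ⟨k, hk⟩ := OCode.exists_mem_eval_prefixList _ h
  rw [← Denumerable.ofNat_encode (prefixList g k), ← OCode.eval_compile] at hk
  obtain ⟨s, hs⟩ := Nat.Partrec.Code.evaln_complete.1 hk
  exact ⟨s, k, hs⟩

theorem recursiveIn_boundedEval (g : ℕ → ℕ) :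
    Nat.RecursiveInSingle g fun n => Part.some (Encodable.encode
      (boundedEval g n.unpair.1.unpair.1 n.unpair.1.unpair.2 n.unpair.2.unpair.1
        n.unpair.2.unpair.2)) := by
  have hp : ∀ {f : ℕ → ℕ × ℕ}, Primrec f → Primrec fun n => (f n).1 := (Primrec.fst.comp ·)
  have hq : ∀ {f : ℕ → ℕ × ℕ}, Primrec f → Primrec fun n => (f n).2 := (Primrec.snd.comp ·)
  have hx : Primrec fun n : ℕ => n.unpair.1.unpair := Primrec.unpair.comp (hp Primrec.unpair)
  have ht : Primrec fun n : ℕ => n.unpair.2.unpair := Primrec.unpair.comp (hq Primrec.unpair)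
  refine ((recursiveIn_encode_reverse_prefixList g).comp_primrec (hq ht)).map₂
    (q := fun n H => Encodable.encode (Nat.Partrec.Code.evaln n.unpair.2.unpair.1
      (OCode.ofNat n.unpair.1.unpair.1).compile
      (Nat.pair (Encodable.encode (Denumerable.ofNat (List ℕ) H).reverse) n.unpair.1.unpair.2)))
    ?_ |>.of_eq fun n => by simp [boundedEval]
  exact (Primrec.encode.comp (Nat.Partrec.Code.primrec_evaln.comp (Primrec.pair
    (Primrec.pair ((hp ht).comp Primrec.fst) (OCode.primrec_compile_ofNat.comp ((hp hx).comp
      Primrec.fst)))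
    (Primrec₂.natPair.comp (Primrec.encode.comp (Primrec.list_reverse.comp
      ((Primrec.ofNat (List ℕ)).comp Primrec.snd))) ((hq hx).comp Primrec.fst))))).to₂

theorem exists_universal (g : ℕ → ℕ) :
    ∃ U : ℕ →. ℕ, Nat.RecursiveInSingle g U ∧ ∀ e x a, a ∈ phi g e x → a ∈ U (Nat.pair e x) := by
  refine ⟨_, (recursiveIn_boundedEval g).rfindOpt, fun e x a ha => ?_⟩
  simp only [Nat.unpair_pair]
  obtain ⟨s, k, hsk⟩ := exists_boundedEval_eq_some ha
  have hdom : (Nat.rfindOpt fun t => boundedEval g e x t.unpair.1 t.unpair.2).Dom :=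
    Nat.rfindOpt_dom.2 ⟨Nat.pair s k, a, by simpa using hsk⟩
  obtain ⟨t, ht⟩ := Nat.rfindOpt_spec (Part.get_mem hdom)
  have hb := mem_phi_of_boundedEval_eq_some (by simpa using ht)
  rw [Part.mem_unique ha hb]
  exact Part.get_mem hdom

open Classical in
theorem mem_dOracle {P Q : Set ℕ} {n v : ℕ} :
    v ∈ dOracle P Q n ↔ n ∈ P ∪ Q ∧ v = if n ∈ Q then 1 else 0 :=
  ⟨fun ⟨h, hv⟩ => ⟨h, hv.symm⟩, fun ⟨h, hv⟩ => ⟨h, hv.symm⟩⟩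

theorem dOracle_eq_zero {P Q : Set ℕ} {n : ℕ} (hP : n ∈ P) (hQ : n ∉ Q) :
    dOracle P Q n = Part.some 0 :=
  Part.eq_some_iff.2 (mem_dOracle.2 ⟨Or.inl hP, by simp [hQ]⟩)

theorem dOracle_eq_one {P Q : Set ℕ} {n : ℕ} (hQ : n ∈ Q) : dOracle P Q n = Part.some 1 :=
  Part.eq_some_iff.2 (mem_dOracle.2 ⟨Or.inr hQ, by simp [hQ]⟩)

theorem t1Reducible_dOracle {P Q : Set ℕ} {g h : ℕ →. ℕ} (hh : Nat.RecursiveInSingle g h)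
    (hP : ∀ n ∈ P, 0 ∈ h n) (hQ : ∀ n ∈ Q, 1 ∈ h n) : T1Reducible (dOracle P Q) g := by
  refine ⟨h, hh, fun n v hv => ?_⟩
  obtain ⟨hn, rfl⟩ := mem_dOracle.1 hv
  by_cases hnQ : n ∈ Q
  · simpa [hnQ] using hQ n hnQ
  · simpa [hnQ] using hP n (hn.resolve_right hnQ)

theorem pair_mem_tensor {P Q : Set ℕ} {p q : ℕ} : Nat.pair p q ∈ P ⊗ Q ↔ p ∈ P ∧ q ∈ Q := by
  constructor
  · rintro ⟨p', hp, q', hq, h⟩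
    obtain ⟨rfl, rfl⟩ := Nat.pair_eq_pair.1 h
    exact ⟨hp, hq⟩
  · rintro ⟨hp, hq⟩
    exact ⟨p, hp, q, hq, rfl⟩

theorem notMem_Hset_of_mem_Hset {A : Set ℕ} {e i j : ℕ} (hij : i ≠ j) (he : e ∈ Hset A i) :
    e ∉ Hset A j :=
  fun he' => hij (Part.mem_unique he he')

theorem t1Reducible_dOracle_tensor_chi_left (A Q₀ Q₁ : Set ℕ) :
    T1Reducible (dOracle (Hset A 0 ⊗ Q₀) (Hset A 1 ⊗ Q₁)) (chi A) := by
  obtain ⟨U, hU, hUphi⟩ := exists_universal (chi A)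
  refine t1Reducible_dOracle (hU.comp_primrec (r := fun n => Nat.pair n.unpair.1 0)
    (Primrec₂.natPair.comp (Primrec.fst.comp Primrec.unpair) (Primrec.const 0))) ?_ ?_ <;>
  · rintro _ ⟨p, hp, q, -, rfl⟩
    simpa using hUphi p 0 _ hp

theorem t1Reducible_dOracle_tensor_chi_right (B P₀ P₁ : Set ℕ) :
    T1Reducible (dOracle (P₀ ⊗ Hset B 0) (P₁ ⊗ Hset B 1)) (chi B) := by
  obtain ⟨U, hU, hUphi⟩ := exists_universal (chi B)
  refine t1Reducible_dOracle (hU.comp_primrec (r := fun n => Nat.pair n.unpair.2 0)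
    (Primrec₂.natPair.comp (Primrec.snd.comp Primrec.unpair) (Primrec.const 0))) ?_ ?_ <;>
  · rintro _ ⟨p, -, q, hq, rfl⟩
    simpa using hUphi q 0 _ hq

theorem t1Reducible_dOracle_Hset_of_t1Reducible_chi {k : ℕ →. ℕ} {A B : Set ℕ}
    (hkA : T1Reducible k (chi A)) (hkB : T1Reducible k (chi B)) :
    T1Reducible k (dOracle (Hset A 0 ⊗ Hset B 0) (Hset A 1 ⊗ Hset B 1)) := by
  obtain ⟨hA, hArec, hAk⟩ := hkA
  obtain ⟨hB, hBrec, hBk⟩ := hkB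
  obtain ⟨sA, hsA, hsAphi⟩ := exists_primrec_index hArec.compare
  obtain ⟨sB, hsB, hsBphi⟩ := exists_primrec_index hBrec.compare
  refine ⟨_, (Nat.RecursiveInSingle.oracle.comp_primrec
    (Primrec₂.natPair.comp hsA hsB)).rfind, fun n a ha => ?_⟩
  have hd : ∀ v, dOracle (Hset A 0 ⊗ Hset B 0) (Hset A 1 ⊗ Hset B 1)
      (Nat.pair (sA (Nat.pair n v)) (sB (Nat.pair n v))) = Part.some (if a = v then 0 else 1) := by
    intro v
    have hA' : (if a = v then 0 else 1) ∈ phi (chi A) (sA (Nat.pair n v)) 0 := by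
      simpa [hsAphi] using Part.mem_map _ (hAk n a ha)
    have hB' : (if a = v then 0 else 1) ∈ phi (chi B) (sB (Nat.pair n v)) 0 := by
      simpa [hsBphi] using Part.mem_map _ (hBk n a ha)
    split_ifs at hA' hB' ⊢
    · exact dOracle_eq_zero (pair_mem_tensor.2 ⟨hA', hB'⟩) fun h =>
        notMem_Hset_of_mem_Hset zero_ne_one hA' (pair_mem_tensor.1 h).1
    · exact dOracle_eq_one (pair_mem_tensor.2 ⟨hA', hB'⟩)
  refine Nat.mem_rfind.2 ⟨?_, fun {m} hm => ?_⟩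
  · simp [hd]
  · simp [hd, hm.ne']

theorem stmt16 (A B : Set ℕ) :
    T1Reducible (dOracle (Hset A 0 ⊗ Hset B 0) (Hset A 1 ⊗ Hset B 1)) ↑(chi A) ∧
    T1Reducible (dOracle (Hset A 0 ⊗ Hset B 0) (Hset A 1 ⊗ Hset B 1)) ↑(chi B) ∧
    ∀ k : ℕ →. ℕ, T1Reducible k ↑(chi A) → T1Reducible k ↑(chi B) →
      T1Reducible k (dOracle (Hset A 0 ⊗ Hset B 0) (Hset A 1 ⊗ Hset B 1)) :=
  ⟨t1Reducible_dOracle_tensor_chi_left A _ _, t1Reducible_dOracle_tensor_chi_right B _ _,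
    fun _ hkA hkB => t1Reducible_dOracle_Hset_of_t1Reducible_chi hkA hkB⟩
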